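/- arXiv:math/0509140 — 9 statements merged into one kernel-verified Lean document; each statement's English description precedes it below -/
import Mathlib

section
/- (Noether's theorem for optimal control) If the generators (T, X, U, Ψ) satisfy the invariance identity (∂H/∂t)T + (∂H/∂x)·X + (∂H/∂u)·U + (∂H/∂ψ)·Ψ − Ψᵀ·ẋ − ψᵀ·(dX/dt) + H·(dT/dt) = 0 along a Pontryagin extremal (x,u,ψ₀,ψ), then the quantity C(t) = ψ(t)ᵀ·X(t,x(t),ψ₀,ψ(t)) − H(t,x(t),u(t),ψ₀,ψ(t))·T(t,x(t),ψ₀,ψ(t)) is constant on [a,b]. -/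
open Finset in
lemma noether_total_deriv {n m : ℕ}
    (F : ℝ × (Fin n → ℝ) × (Fin m → ℝ) × (Fin n → ℝ) → ℝ)
    (hF : ContDiff ℝ 1 F)
    (x : ℝ → Fin n → ℝ) (u : ℝ → Fin m → ℝ) (ψ : ℝ → Fin n → ℝ)
    (hx : Differentiable ℝ x) (hu : Differentiable ℝ u) (hψ : Differentiable ℝ ψ) (t : ℝ) :
    HasDerivAt (fun s => F (s, x s, u s, ψ s))
      (deriv (fun s => F (s, x t, u t, ψ t)) t
       + (∑ i, deriv (fun y => F (t, Function.update (x t) i y, u t, ψ t)) (x t i)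
             * deriv (fun s => x s i) t)
       + (∑ j, deriv (fun y => F (t, x t, Function.update (u t) j y, ψ t)) (u t j)
             * deriv (fun s => u s j) t)
       + (∑ i, deriv (fun y => F (t, x t, u t, Function.update (ψ t) i y)) (ψ t i)
             * deriv (fun s => ψ s i) t)) t := by
  classical
  set p : ℝ × (Fin n → ℝ) × (Fin m → ℝ) × (Fin n → ℝ) := (t, x t, u t, ψ t) with hp
  have hFd : HasFDerivAt F (fderiv ℝ F p) p := (hF.differentiable one_ne_zero p).hasFDerivAt
  set f' := fderiv ℝ F p with hf'
  set xd : Fin n → ℝ := fun i => deriv (fun s => x s i) t with hxd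
  set ud : Fin m → ℝ := fun j => deriv (fun s => u s j) t with hud
  set ψd : Fin n → ℝ := fun i => deriv (fun s => ψ s i) t with hψd
  have hxc : ∀ i, HasDerivAt (fun s => x s i) (xd i) t := fun i =>
    (((ContinuousLinearMap.proj (R := ℝ) (φ := fun _ : Fin n => ℝ) i).differentiableAt).comp t
      (hx t)).hasDerivAt
  have huc : ∀ j, HasDerivAt (fun s => u s j) (ud j) t := fun j =>
    (((ContinuousLinearMap.proj (R := ℝ) (φ := fun _ : Fin m => ℝ) j).differentiableAt).comp t
      (hu t)).hasDerivAt
  have hψc : ∀ i, HasDerivAt (fun s => ψ s i) (ψd i) t := fun i =>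
    (((ContinuousLinearMap.proj (R := ℝ) (φ := fun _ : Fin n => ℝ) i).differentiableAt).comp t
      (hψ t)).hasDerivAt
  have hγ : HasDerivAt (fun s => ((s, x s, u s, ψ s) : ℝ × (Fin n → ℝ) × (Fin m → ℝ) × (Fin n → ℝ)))
      (1, xd, ud, ψd) t :=
    (hasDerivAt_id t).prodMk ((hasDerivAt_pi.2 hxc).prodMk
      ((hasDerivAt_pi.2 huc).prodMk (hasDerivAt_pi.2 hψc)))
  have main : HasDerivAt (fun s => F (s, x s, u s, ψ s)) (f' (1, xd, ud, ψd)) t :=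
    hFd.comp_hasDerivAt t hγ
  -- partial derivatives as f' of basis directions
  have hpt : deriv (fun s => F (s, x t, u t, ψ t)) t
      = f' (1, (0 : Fin n → ℝ), (0 : Fin m → ℝ), (0 : Fin n → ℝ)) := by
    have : HasDerivAt (fun s => F (s, x t, u t, ψ t))
        (f' (1, (0 : Fin n → ℝ), (0 : Fin m → ℝ), (0 : Fin n → ℝ))) t :=
      hFd.comp_hasDerivAt t ((hasDerivAt_id t).prodMk ((hasDerivAt_const t _).prodMk
        ((hasDerivAt_const t _).prodMk (hasDerivAt_const t _))))
    exact this.deriv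
  have hpx : ∀ i, deriv (fun y => F (t, Function.update (x t) i y, u t, ψ t)) (x t i)
      = f' (0, Pi.single i 1, (0 : Fin m → ℝ), (0 : Fin n → ℝ)) := by
    intro i
    have : HasDerivAt (fun y => F (t, Function.update (x t) i y, u t, ψ t))
        (f' (0, Pi.single i 1, (0 : Fin m → ℝ), (0 : Fin n → ℝ))) (x t i) := by
      have hγ2 : HasDerivAt (fun y => ((t, Function.update (x t) i y, u t, ψ t) :
          ℝ × (Fin n → ℝ) × (Fin m → ℝ) × (Fin n → ℝ)))
          (0, Pi.single i 1, (0 : Fin m → ℝ), (0 : Fin n → ℝ)) (x t i) :=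
        (hasDerivAt_const _ _).prodMk ((hasDerivAt_update (x t) i (x t i)).prodMk
          ((hasDerivAt_const _ _).prodMk (hasDerivAt_const _ _)))
      have hFd' : HasFDerivAt F f' (t, Function.update (x t) i (x t i), u t, ψ t) := by
        rw [Function.update_eq_self]; exact hFd
      exact hFd'.comp_hasDerivAt (x t i) hγ2
    exact this.deriv
  have hpu : ∀ j, deriv (fun y => F (t, x t, Function.update (u t) j y, ψ t)) (u t j)
      = f' (0, (0 : Fin n → ℝ), Pi.single j 1, (0 : Fin n → ℝ)) := by
    intro j
    have hγ2 : HasDerivAt (fun y => ((t, x t, Function.update (u t) j y, ψ t) :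
        ℝ × (Fin n → ℝ) × (Fin m → ℝ) × (Fin n → ℝ)))
        (0, (0 : Fin n → ℝ), Pi.single j 1, (0 : Fin n → ℝ)) (u t j) :=
      (hasDerivAt_const _ _).prodMk ((hasDerivAt_const _ _).prodMk
        ((hasDerivAt_update (u t) j (u t j)).prodMk (hasDerivAt_const _ _)))
    have hFd' : HasFDerivAt F f' (t, x t, Function.update (u t) j (u t j), ψ t) := by
      rw [Function.update_eq_self]; exact hFd
    exact (hFd'.comp_hasDerivAt (u t j) hγ2).deriv
  have hpψ : ∀ i, deriv (fun y => F (t, x t, u t, Function.update (ψ t) i y)) (ψ t i)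
      = f' (0, (0 : Fin n → ℝ), (0 : Fin m → ℝ), Pi.single i 1) := by
    intro i
    have hγ2 : HasDerivAt (fun y => ((t, x t, u t, Function.update (ψ t) i y) :
        ℝ × (Fin n → ℝ) × (Fin m → ℝ) × (Fin n → ℝ)))
        (0, (0 : Fin n → ℝ), (0 : Fin m → ℝ), Pi.single i 1) (ψ t i) :=
      (hasDerivAt_const _ _).prodMk ((hasDerivAt_const _ _).prodMk
        ((hasDerivAt_const _ _).prodMk (hasDerivAt_update (ψ t) i (ψ t i))))
    have hFd' : HasFDerivAt F f' (t, x t, u t, Function.update (ψ t) i (ψ t i)) := by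
      rw [Function.update_eq_self]; exact hFd
    exact (hFd'.comp_hasDerivAt (ψ t i) hγ2).deriv
  -- decompose the direction
  have hvec : ∀ v : Fin n → ℝ, v = ∑ i, v i • (Pi.single i (1 : ℝ) : Fin n → ℝ) := by
    intro v; funext j
    simp [Pi.single_apply, Finset.sum_apply]
  have hvecm : ∀ v : Fin m → ℝ, v = ∑ j, v j • (Pi.single j (1 : ℝ) : Fin m → ℝ) := by
    intro v; funext j
    simp [Pi.single_apply, Finset.sum_apply]
  have hdir : ((1 : ℝ), xd, ud, ψd)
      = ((1 : ℝ), (0 : Fin n → ℝ), (0 : Fin m → ℝ), (0 : Fin n → ℝ))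
        + (∑ i, xd i • (((0 : ℝ), (Pi.single i (1:ℝ) : Fin n → ℝ), (0 : Fin m → ℝ), (0 : Fin n → ℝ)) : ℝ × (Fin n → ℝ) × (Fin m → ℝ) × (Fin n → ℝ)))
        + (∑ j, ud j • (((0 : ℝ), (0 : Fin n → ℝ), (Pi.single j (1:ℝ) : Fin m → ℝ), (0 : Fin n → ℝ)) : ℝ × (Fin n → ℝ) × (Fin m → ℝ) × (Fin n → ℝ)))
        + (∑ i, ψd i • (((0 : ℝ), (0 : Fin n → ℝ), (0 : Fin m → ℝ), (Pi.single i (1:ℝ) : Fin n → ℝ)) : ℝ × (Fin n → ℝ) × (Fin m → ℝ) × (Fin n → ℝ))) := by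
    rw [Prod.ext_iff, Prod.ext_iff, Prod.ext_iff]
    refine ⟨?_, ?_, ?_, ?_⟩ <;>
      simp [Prod.fst_sum, Prod.snd_sum, ← hvec, ← hvecm]
  have hval : f' (1, xd, ud, ψd)
      = f' (1, (0 : Fin n → ℝ), (0 : Fin m → ℝ), (0 : Fin n → ℝ))
        + (∑ i, f' (0, Pi.single i 1, (0 : Fin m → ℝ), (0 : Fin n → ℝ)) * xd i)
        + (∑ j, f' (0, (0 : Fin n → ℝ), Pi.single j 1, (0 : Fin n → ℝ)) * ud j)
        + (∑ i, f' (0, (0 : Fin n → ℝ), (0 : Fin m → ℝ), Pi.single i 1) * ψd i) := by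
    rw [hdir, map_add, map_add, map_add, map_sum, map_sum, map_sum]
    congr 1
    · congr 1
      · congr 1
        exact Finset.sum_congr rfl fun i _ => by rw [map_smul, smul_eq_mul, mul_comm]
      · exact Finset.sum_congr rfl fun j _ => by rw [map_smul, smul_eq_mul, mul_comm]
    · exact Finset.sum_congr rfl fun i _ => by rw [map_smul, smul_eq_mul, mul_comm]
  simp only [hpt, hpx, hpu, hpψ]
  rw [← hval]
  exact main
/-- Noether's theorem for optimal control: if the generators (T, X, U, Ψ)
satisfy the invariance identity along a Pontryagin extremal, then
C(t) = ψ(t)ᵀ·X − H·T is constant on [a,b]. -/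
theorem noether_optimal_control
    (n m : ℕ) (a b : ℝ)
    (L : ℝ → (Fin n → ℝ) → (Fin m → ℝ) → ℝ)
    (φ : ℝ → (Fin n → ℝ) → (Fin m → ℝ) → (Fin n → ℝ))
    (hL : ContDiff ℝ 1 (fun p : ℝ × (Fin n → ℝ) × (Fin m → ℝ) => L p.1 p.2.1 p.2.2))
    (hφ : ContDiff ℝ 1 (fun p : ℝ × (Fin n → ℝ) × (Fin m → ℝ) => φ p.1 p.2.1 p.2.2))
    (x : ℝ → Fin n → ℝ) (u : ℝ → Fin m → ℝ) (ψ0 : ℝ) (ψ : ℝ → Fin n → ℝ)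
    (hx : Differentiable ℝ x) (hu : Differentiable ℝ u) (hψ : Differentiable ℝ ψ)
    (H : ℝ → (Fin n → ℝ) → (Fin m → ℝ) → (Fin n → ℝ) → ℝ)
    (hH : ∀ t xv uv ψv, H t xv uv ψv = ψ0 * L t xv uv + ∑ i, ψv i * φ t xv uv i)
    -- generators
    (T : ℝ → (Fin n → ℝ) → ℝ → (Fin n → ℝ) → ℝ)
    (X : ℝ → (Fin n → ℝ) → ℝ → (Fin n → ℝ) → (Fin n → ℝ))
    (U : ℝ → (Fin n → ℝ) → (Fin m → ℝ) → ℝ → (Fin n → ℝ) → (Fin m → ℝ))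
    (Ψ : ℝ → (Fin n → ℝ) → (Fin m → ℝ) → ℝ → (Fin n → ℝ) → (Fin n → ℝ))
    (hT : ContDiff ℝ 1 (fun p : ℝ × (Fin n → ℝ) × ℝ × (Fin n → ℝ) =>
            T p.1 p.2.1 p.2.2.1 p.2.2.2))
    (hX : ContDiff ℝ 1 (fun p : ℝ × (Fin n → ℝ) × ℝ × (Fin n → ℝ) =>
            X p.1 p.2.1 p.2.2.1 p.2.2.2))
    -- Pontryagin extremal: Hamiltonian system, adjoint system and stationarity
    (hsys : ∀ t ∈ Set.Icc a b, ∀ i,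
      deriv (fun s => x s i) t = φ t (x t) (u t) i)
    (hadj : ∀ t ∈ Set.Icc a b, ∀ i,
      deriv (fun s => ψ s i) t
        = - deriv (fun y => H t (Function.update (x t) i y) (u t) (ψ t)) (x t i))
    (hstat : ∀ t ∈ Set.Icc a b, ∀ j,
      deriv (fun y => H t (x t) (Function.update (u t) j y) (ψ t)) (u t j) = 0)
    -- invariance identity along the extremal
    (hinv : ∀ t ∈ Set.Icc a b,
      deriv (fun s => H s (x t) (u t) (ψ t)) t * T t (x t) ψ0 (ψ t)
      + (∑ i, deriv (fun y => H t (Function.update (x t) i y) (u t) (ψ t)) (x t i)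
              * X t (x t) ψ0 (ψ t) i)
      + (∑ j, deriv (fun y => H t (x t) (Function.update (u t) j y) (ψ t)) (u t j)
              * U t (x t) (u t) ψ0 (ψ t) j)
      + (∑ i, deriv (fun y => H t (x t) (u t) (Function.update (ψ t) i y)) (ψ t i)
              * Ψ t (x t) (u t) ψ0 (ψ t) i)
      - (∑ i, Ψ t (x t) (u t) ψ0 (ψ t) i * deriv (fun s => x s i) t)
      - (∑ i, ψ t i * deriv (fun s => X s (x s) ψ0 (ψ s) i) t)
      + H t (x t) (u t) (ψ t) * deriv (fun s => T s (x s) ψ0 (ψ s)) t = 0) :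
    ∀ t₁ ∈ Set.Icc a b, ∀ t₂ ∈ Set.Icc a b,
      (∑ i, ψ t₁ i * X t₁ (x t₁) ψ0 (ψ t₁) i)
        - H t₁ (x t₁) (u t₁) (ψ t₁) * T t₁ (x t₁) ψ0 (ψ t₁)
      = (∑ i, ψ t₂ i * X t₂ (x t₂) ψ0 (ψ t₂) i)
        - H t₂ (x t₂) (u t₂) (ψ t₂) * T t₂ (x t₂) ψ0 (ψ t₂) := by
  classical
  -- H as a C¹ function on the product space
  have hHF : ContDiff ℝ 1 (fun p : ℝ × (Fin n → ℝ) × (Fin m → ℝ) × (Fin n → ℝ) =>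
      H p.1 p.2.1 p.2.2.1 p.2.2.2) := by
    have hfun : (fun p : ℝ × (Fin n → ℝ) × (Fin m → ℝ) × (Fin n → ℝ) =>
        H p.1 p.2.1 p.2.2.1 p.2.2.2)
        = fun p => ψ0 * L p.1 p.2.1 p.2.2.1 + ∑ i, p.2.2.2 i * φ p.1 p.2.1 p.2.2.1 i := by
      funext p; exact hH _ _ _ _
    rw [hfun]
    have hproj : ContDiff ℝ 1 (fun p : ℝ × (Fin n → ℝ) × (Fin m → ℝ) × (Fin n → ℝ) =>
        ((p.1, p.2.1, p.2.2.1) : ℝ × (Fin n → ℝ) × (Fin m → ℝ))) :=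
      contDiff_fst.prodMk ((contDiff_fst.comp contDiff_snd).prodMk
        (contDiff_fst.comp (contDiff_snd.comp contDiff_snd)))
    have hLc : ContDiff ℝ 1 (fun p : ℝ × (Fin n → ℝ) × (Fin m → ℝ) × (Fin n → ℝ) =>
        L p.1 p.2.1 p.2.2.1) := hL.comp hproj
    have hφc : ContDiff ℝ 1 (fun p : ℝ × (Fin n → ℝ) × (Fin m → ℝ) × (Fin n → ℝ) =>
        φ p.1 p.2.1 p.2.2.1) := hφ.comp hproj
    have hψc : ContDiff ℝ 1 (fun p : ℝ × (Fin n → ℝ) × (Fin m → ℝ) × (Fin n → ℝ) =>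
        p.2.2.2) := contDiff_snd.comp (contDiff_snd.comp contDiff_snd)
    exact (contDiff_const.mul hLc).add
      (ContDiff.sum fun i _ => ((contDiff_pi.mp hψc i).mul (contDiff_pi.mp hφc i)))
  -- the partial derivative of H in ψ_i is φ_i
  have hpsival : ∀ t : ℝ, ∀ i,
      deriv (fun y => H t (x t) (u t) (Function.update (ψ t) i y)) (ψ t i)
        = φ t (x t) (u t) i := by
    intro t i
    have hfun : (fun y => H t (x t) (u t) (Function.update (ψ t) i y))
        = fun y : ℝ => ψ0 * L t (x t) (u t)
            + (y * φ t (x t) (u t) i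
              + ∑ k ∈ Finset.univ \ {i}, ψ t k * φ t (x t) (u t) k) := by
      funext y
      rw [hH]
      congr 1
      have hterm : ∀ k : Fin n, Function.update (ψ t) i y k * φ t (x t) (u t) k
          = Function.update (fun k => ψ t k * φ t (x t) (u t) k)
              i (y * φ t (x t) (u t) i) k := by
        intro k
        rcases eq_or_ne k i with h | h <;> simp [h, Function.update_apply]
      rw [Finset.sum_congr rfl fun k _ => hterm k,
        Finset.sum_update_of_mem (Finset.mem_univ i)]
    have key : HasDerivAt (fun y : ℝ => ψ0 * L t (x t) (u t)
        + (y * φ t (x t) (u t) i + ∑ k ∈ Finset.univ \ {i}, ψ t k * φ t (x t) (u t) k))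
        (φ t (x t) (u t) i) (ψ t i) := by
      simpa using
        (((hasDerivAt_id (ψ t i)).mul_const (φ t (x t) (u t) i)).add_const
          (∑ k ∈ Finset.univ \ {i}, ψ t k * φ t (x t) (u t) k)).const_add
          (ψ0 * L t (x t) (u t))
    rw [hfun]
    exact key.deriv
  -- the conserved quantity
  set C : ℝ → ℝ := fun s => (∑ i, ψ s i * X s (x s) ψ0 (ψ s) i)
      - H s (x s) (u s) (ψ s) * T s (x s) ψ0 (ψ s) with hCdef
  have hC0 : ∀ t ∈ Set.Icc a b, HasDerivAt C 0 t := by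
    intro t ht
    have hψc : ∀ i, HasDerivAt (fun s => ψ s i) (deriv (fun s => ψ s i) t) t := fun i =>
      (((ContinuousLinearMap.proj (R := ℝ) (φ := fun _ : Fin n => ℝ) i).differentiableAt).comp t
        (hψ t)).hasDerivAt
    have hpath : DifferentiableAt ℝ
        (fun s => ((s, x s, ψ0, ψ s) : ℝ × (Fin n → ℝ) × ℝ × (Fin n → ℝ))) t :=
      differentiableAt_id.prodMk ((hx t).prodMk ((differentiableAt_const _).prodMk (hψ t)))
    have hXfull : DifferentiableAt ℝ (fun s => X s (x s) ψ0 (ψ s)) t :=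
      ((hX.differentiable one_ne_zero) (t, x t, ψ0, ψ t)).comp (g := fun p : ℝ × (Fin n → ℝ) × ℝ × (Fin n → ℝ) =>
            X p.1 p.2.1 p.2.2.1 p.2.2.2) t hpath
    have hXc : ∀ i, HasDerivAt (fun s => X s (x s) ψ0 (ψ s) i)
        (deriv (fun s => X s (x s) ψ0 (ψ s) i) t) t := fun i =>
      ((differentiableAt_pi.mp hXfull) i).hasDerivAt
    have hTc : HasDerivAt (fun s => T s (x s) ψ0 (ψ s))
        (deriv (fun s => T s (x s) ψ0 (ψ s)) t) t :=
      (((hT.differentiable one_ne_zero) (t, x t, ψ0, ψ t)).comp (g := fun p : ℝ × (Fin n → ℝ) × ℝ × (Fin n → ℝ) =>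
            T p.1 p.2.1 p.2.2.1 p.2.2.2) t hpath).hasDerivAt
    have hsum : HasDerivAt (fun s => ∑ i, ψ s i * X s (x s) ψ0 (ψ s) i)
        (∑ i, (deriv (fun s => ψ s i) t * X t (x t) ψ0 (ψ t) i
              + ψ t i * deriv (fun s => X s (x s) ψ0 (ψ s) i) t)) t :=
      HasDerivAt.fun_sum fun i _ => (hψc i).mul (hXc i)
    have hHtot : HasDerivAt (fun s => H s (x s) (u s) (ψ s))
        (deriv (fun s => H s (x t) (u t) (ψ t)) t
         + (∑ i, deriv (fun y => H t (Function.update (x t) i y) (u t) (ψ t)) (x t i)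
               * deriv (fun s => x s i) t)
         + (∑ j, deriv (fun y => H t (x t) (Function.update (u t) j y) (ψ t)) (u t j)
               * deriv (fun s => u s j) t)
         + (∑ i, deriv (fun y => H t (x t) (u t) (Function.update (ψ t) i y)) (ψ t i)
               * deriv (fun s => ψ s i) t)) t :=
      noether_total_deriv (fun p => H p.1 p.2.1 p.2.2.1 p.2.2.2) hHF x u ψ hx hu hψ t
    have hmain := hsum.fun_sub (hHtot.fun_mul hTc)
    -- now show the derivative value is zero
    have hQ := hstat t ht
    have hR : ∀ i, deriv (fun y => H t (x t) (u t) (Function.update (ψ t) i y)) (ψ t i)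
        = deriv (fun s => x s i) t := fun i => (hpsival t i).trans (hsys t ht i).symm
    have hP := hadj t ht
    have hinv' := hinv t ht
    have s1 : (∑ i, (deriv (fun s => ψ s i) t * X t (x t) ψ0 (ψ t) i
              + ψ t i * deriv (fun s => X s (x s) ψ0 (ψ s) i) t))
        = -(∑ i, deriv (fun y => H t (Function.update (x t) i y) (u t) (ψ t)) (x t i)
              * X t (x t) ψ0 (ψ t) i)
          + ∑ i, ψ t i * deriv (fun s => X s (x s) ψ0 (ψ s) i) t := by
      rw [Finset.sum_add_distrib, ← Finset.sum_neg_distrib]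
      congr 1
      exact Finset.sum_congr rfl fun i _ => by rw [hP i]; ring
    have s2 : (∑ j, deriv (fun y => H t (x t) (Function.update (u t) j y) (ψ t)) (u t j)
          * deriv (fun s => u s j) t) = 0 :=
      Finset.sum_eq_zero fun j _ => by rw [hQ j]; ring
    have s3 : (∑ i, deriv (fun y => H t (x t) (u t) (Function.update (ψ t) i y)) (ψ t i)
          * deriv (fun s => ψ s i) t)
        = -(∑ i, deriv (fun y => H t (Function.update (x t) i y) (u t) (ψ t)) (x t i)
              * deriv (fun s => x s i) t) := by
      rw [← Finset.sum_neg_distrib]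
      exact Finset.sum_congr rfl fun i _ => by rw [hR i, hP i]; ring
    have s4 : (∑ j, deriv (fun y => H t (x t) (Function.update (u t) j y) (ψ t)) (u t j)
          * U t (x t) (u t) ψ0 (ψ t) j) = 0 :=
      Finset.sum_eq_zero fun j _ => by rw [hQ j]; ring
    have s5 : (∑ i, deriv (fun y => H t (x t) (u t) (Function.update (ψ t) i y)) (ψ t i)
          * Ψ t (x t) (u t) ψ0 (ψ t) i)
        = ∑ i, Ψ t (x t) (u t) ψ0 (ψ t) i * deriv (fun s => x s i) t :=
      Finset.sum_congr rfl fun i _ => by rw [hR i]; ring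
    rw [s4, s5] at hinv'
    refine hmain.congr_deriv ?_
    symm
    rw [s1, s2, s3]
    linear_combination hinv'
  -- conclude: C is constant on [a, b]
  intro t₁ ht₁ t₂ ht₂
  show C t₁ = C t₂
  rcases le_total t₁ t₂ with h | h
  · have hsub : Set.Icc t₁ t₂ ⊆ Set.Icc a b := Set.Icc_subset_Icc ht₁.1 ht₂.2
    have := constant_of_has_deriv_right_zero (f := C) (a := t₁) (b := t₂)
      (fun s hs => (hC0 s (hsub hs)).continuousAt.continuousWithinAt)
      (fun s hs => (hC0 s (hsub ⟨hs.1, hs.2.le⟩)).hasDerivWithinAt)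
      t₂ (Set.right_mem_Icc.2 h)
    exact this.symm
  · have hsub : Set.Icc t₂ t₁ ⊆ Set.Icc a b := Set.Icc_subset_Icc ht₂.1 ht₁.2
    exact constant_of_has_deriv_right_zero (f := C) (a := t₂) (b := t₁)
      (fun s hs => (hC0 s (hsub hs)).continuousAt.continuousWithinAt)
      (fun s hs => (hC0 s (hsub ⟨hs.1, hs.2.le⟩)).hasDerivWithinAt)
      t₁ (Set.right_mem_Icc.2 h)
end

section
/- For the optimal control problem with Lagrangian e^{tx}u and dynamics ẋ = t x u², the quantity x(t)ψ(t) + tψ₀e^{tx(t)}u(t) + t²x(t)ψ(t)u(t)² is constant along every Pontryagin extremal. -/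
/-- For L = e^{tx}u and ẋ = t x u², the quantity
xψ + tψ₀e^{tx}u + t²xψu² is constant along every Pontryagin extremal. -/
theorem exp_problem_conservation
    (a b : ℝ) (x u ψ : ℝ → ℝ) (ψ0 : ℝ)
    (hx : Differentiable ℝ x) (hu : Differentiable ℝ u) (hψ : Differentiable ℝ ψ)
    (hsys : ∀ t ∈ Set.Icc a b, deriv x t = t * x t * (u t)^2)
    (hadj : ∀ t ∈ Set.Icc a b,
      deriv ψ t = -(ψ0 * t * Real.exp (t * x t) * u t) - ψ t * t * (u t)^2)
    (hstat : ∀ t ∈ Set.Icc a b,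
      ψ0 * Real.exp (t * x t) + 2 * ψ t * t * x t * u t = 0) :
    ∀ t₁ ∈ Set.Icc a b, ∀ t₂ ∈ Set.Icc a b,
      x t₁ * ψ t₁ + t₁ * ψ0 * Real.exp (t₁ * x t₁) * u t₁
        + t₁^2 * x t₁ * ψ t₁ * (u t₁)^2
      = x t₂ * ψ t₂ + t₂ * ψ0 * Real.exp (t₂ * x t₂) * u t₂
        + t₂^2 * x t₂ * ψ t₂ * (u t₂)^2 := by
  set E : ℝ → ℝ := fun t => x t * ψ t + t * ψ0 * Real.exp (t * x t) * u t
      + t^2 * x t * ψ t * (u t)^2 with hE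
  -- E is differentiable everywhere and its derivative vanishes on [a,b]
  have hEdiff : Differentiable ℝ E := by
    apply Differentiable.add
    apply Differentiable.add
    · exact hx.mul hψ
    · exact (((differentiable_id.mul_const ψ0).mul
        ((differentiable_id.mul hx).exp)).mul hu)
    · exact (((differentiable_id.pow 2).mul hx).mul hψ).mul (hu.pow 2)
  have hEderiv : ∀ t ∈ Set.Icc a b, deriv E t = 0 := by
    intro t ht
    have h1 : HasDerivAt (fun s : ℝ => s * x s) (1 * x t + t * deriv x t) t :=
      (hasDerivAt_id t).mul (hx t).hasDerivAt
    have hexp : HasDerivAt (fun s : ℝ => Real.exp (s * x s))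
        (Real.exp (t * x t) * (1 * x t + t * deriv x t)) t := h1.exp
    have hA : HasDerivAt (fun s : ℝ => x s * ψ s)
        (deriv x t * ψ t + x t * deriv ψ t) t :=
      (hx t).hasDerivAt.mul (hψ t).hasDerivAt
    have hB : HasDerivAt (fun s : ℝ => s * ψ0 * Real.exp (s * x s) * u s)
        (((1 * ψ0) * Real.exp (t * x t)
          + (t * ψ0) * (Real.exp (t * x t) * (1 * x t + t * deriv x t))) * u t
          + (t * ψ0 * Real.exp (t * x t)) * deriv u t) t :=
      (((hasDerivAt_id t).mul_const ψ0).mul hexp).mul (hu t).hasDerivAt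
    have hC : HasDerivAt (fun s : ℝ => s^2 * x s * ψ s * (u s)^2)
        ((((2 : ℕ) * t ^ (2-1) * x t + t^2 * deriv x t) * ψ t
            + t^2 * x t * deriv ψ t) * (u t)^2
          + (t^2 * x t * ψ t) * ((2 : ℕ) * (u t) ^ (2-1) * deriv u t)) t :=
      (((hasDerivAt_pow 2 t).mul (hx t).hasDerivAt).mul (hψ t).hasDerivAt).mul
        ((hu t).hasDerivAt.pow 2)
    have hEt : HasDerivAt E _ t := (hA.add hB).add hC
    rw [hEt.deriv]
    have hs := hsys t ht
    have ha := hadj t ht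
    have hst := hstat t ht
    rw [hs, ha]
    push_cast
    nlinarith [mul_self_nonneg (u t), sq_nonneg t,
      mul_eq_zero_of_left hst (u t + t * deriv u t),
      mul_comm (u t) (deriv u t)]
  intro t₁ ht₁ t₂ ht₂
  rcases lt_trichotomy a b with hab | hab | hab
  · have key : ∀ s ∈ Set.Icc a b, E s = E a := by
      apply constant_of_derivWithin_zero hEdiff.differentiableOn
      intro s hs
      rw [(hEdiff s).derivWithin ((uniqueDiffOn_Icc hab) s (Set.Ico_subset_Icc_self hs))]
      exact hEderiv s (Set.Ico_subset_Icc_self hs)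
    have := (key t₁ ht₁).trans (key t₂ ht₂).symm
    simpa [hE] using this
  · subst hab
    have h1 : t₁ = a := le_antisymm ht₁.2 ht₁.1
    have h2 : t₂ = a := le_antisymm ht₂.2 ht₂.1
    rw [h1, h2]
  · exact absurd (ht₁.1.trans ht₁.2) (not_le.mpr hab)
end

section
/- For the optimal control problem with Lagrangian u₁² + u₂² and dynamics ẋ₁ = x₃, ẋ₂ = x₄, ẋ₃ = −x₁(x₁²+x₂²) + u₁, ẋ₄ = −x₂(x₁²+x₂²) + u₂, the quantity −x₂ψ₁ + x₁ψ₂ − x₄ψ₃ + x₃ψ₄ is constant along every Pontryagin extremal. -/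
/-- −x₂ψ₁ + x₁ψ₂ − x₄ψ₃ + x₃ψ₄ is constant along every Pontryagin extremal. -/
theorem central_force_conservation
    (a b : ℝ) (x₁ x₂ x₃ x₄ u₁ u₂ ψ₁ ψ₂ ψ₃ ψ₄ : ℝ → ℝ) (ψ0 : ℝ)
    (hx₁ : Differentiable ℝ x₁) (hx₂ : Differentiable ℝ x₂)
    (hx₃ : Differentiable ℝ x₃) (hx₄ : Differentiable ℝ x₄)
    (hu₁ : Differentiable ℝ u₁) (hu₂ : Differentiable ℝ u₂)
    (hψ₁ : Differentiable ℝ ψ₁) (hψ₂ : Differentiable ℝ ψ₂)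
    (hψ₃ : Differentiable ℝ ψ₃) (hψ₄ : Differentiable ℝ ψ₄)
    (hsys₁ : ∀ t ∈ Set.Icc a b, deriv x₁ t = x₃ t)
    (hsys₂ : ∀ t ∈ Set.Icc a b, deriv x₂ t = x₄ t)
    (hsys₃ : ∀ t ∈ Set.Icc a b,
      deriv x₃ t = -(x₁ t) * ((x₁ t)^2 + (x₂ t)^2) + u₁ t)
    (hsys₄ : ∀ t ∈ Set.Icc a b,
      deriv x₄ t = -(x₂ t) * ((x₁ t)^2 + (x₂ t)^2) + u₂ t)
    (hadj₁ : ∀ t ∈ Set.Icc a b,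
      deriv ψ₁ t = -(ψ₃ t * (-(3 * (x₁ t)^2) - (x₂ t)^2)
                     + ψ₄ t * (-(2 * x₁ t * x₂ t))))
    (hadj₂ : ∀ t ∈ Set.Icc a b,
      deriv ψ₂ t = -(ψ₃ t * (-(2 * x₁ t * x₂ t))
                     + ψ₄ t * (-((x₁ t)^2) - 3 * (x₂ t)^2)))
    (hadj₃ : ∀ t ∈ Set.Icc a b, deriv ψ₃ t = -(ψ₁ t))
    (hadj₄ : ∀ t ∈ Set.Icc a b, deriv ψ₄ t = -(ψ₂ t))
    (hstat₁ : ∀ t ∈ Set.Icc a b, 2 * ψ0 * u₁ t + ψ₃ t = 0)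
    (hstat₂ : ∀ t ∈ Set.Icc a b, 2 * ψ0 * u₂ t + ψ₄ t = 0) :
    ∀ t₁ ∈ Set.Icc a b, ∀ t₂ ∈ Set.Icc a b,
      -(x₂ t₁) * ψ₁ t₁ + x₁ t₁ * ψ₂ t₁ - x₄ t₁ * ψ₃ t₁ + x₃ t₁ * ψ₄ t₁
      = -(x₂ t₂) * ψ₁ t₂ + x₁ t₂ * ψ₂ t₂ - x₄ t₂ * ψ₃ t₂ + x₃ t₂ * ψ₄ t₂ := by

  set F : ℝ → ℝ := fun t => -(x₂ t) * ψ₁ t + x₁ t * ψ₂ t - x₄ t * ψ₃ t + x₃ t * ψ₄ t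
    with hFdef
  have hF0 : ∀ t ∈ Set.Icc a b, HasDerivAt F 0 t := by
    intro t ht
    have hD : HasDerivAt F
        (((((-(deriv x₂ t)) * ψ₁ t + -(x₂ t) * deriv ψ₁ t)
          + (deriv x₁ t * ψ₂ t + x₁ t * deriv ψ₂ t))
          - (deriv x₄ t * ψ₃ t + x₄ t * deriv ψ₃ t))
          + (deriv x₃ t * ψ₄ t + x₃ t * deriv ψ₄ t)) t := by
      exact ((((hx₂ t).hasDerivAt.neg.mul (hψ₁ t).hasDerivAt).add
        ((hx₁ t).hasDerivAt.mul (hψ₂ t).hasDerivAt)).sub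
        ((hx₄ t).hasDerivAt.mul (hψ₃ t).hasDerivAt)).add
        ((hx₃ t).hasDerivAt.mul (hψ₄ t).hasDerivAt)
    have hz : (((-(deriv x₂ t)) * ψ₁ t + -(x₂ t) * deriv ψ₁ t)
          + (deriv x₁ t * ψ₂ t + x₁ t * deriv ψ₂ t))
          - (deriv x₄ t * ψ₃ t + x₄ t * deriv ψ₃ t)
          + (deriv x₃ t * ψ₄ t + x₃ t * deriv ψ₄ t) = 0 := by
      rw [hsys₁ t ht, hsys₂ t ht, hsys₃ t ht, hsys₄ t ht, hadj₁ t ht, hadj₂ t ht,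
        hadj₃ t ht, hadj₄ t ht]
      linear_combination (-(u₂ t)) * hstat₁ t ht + (u₁ t) * hstat₂ t ht
    rwa [hz] at hD
  have hcont : ContinuousOn F (Set.Icc a b) :=
    (((hx₂.continuous.neg.mul hψ₁.continuous).add
      (hx₁.continuous.mul hψ₂.continuous)).sub
      (hx₄.continuous.mul hψ₃.continuous)).add
      (hx₃.continuous.mul hψ₄.continuous) |>.continuousOn
  have key : ∀ s u : ℝ, s ∈ Set.Icc a b → u ∈ Set.Icc a b → s ≤ u → F s = F u := by
    intro s u hs hu hsu
    have hsub : Set.Icc s u ⊆ Set.Icc a b := Set.Icc_subset_Icc hs.1 hu.2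
    have := eq_of_has_deriv_right_eq (f' := fun _ => (0:ℝ)) (g := fun _ => F s)
      (a := s) (b := u)
      (fun x hx => (hF0 x (hsub (Set.Ico_subset_Icc_self hx))).hasDerivWithinAt)
      (fun x _ => (hasDerivAt_const x (F s)).hasDerivWithinAt)
      (hcont.mono hsub) continuousOn_const rfl
    exact (this u (Set.right_mem_Icc.2 hsu)).symm
  intro t₁ h1 t₂ h2
  rcases le_total t₁ t₂ with h | h
  · exact key _ _ h1 h2 h
  · exact (key _ _ h2 h1 h).symm
end

section
/- For the optimal control problem with Lagrangian u² and dynamics ẋ = 1 + y², ẏ = u, the quantity (2t − 4x(t))ψ₁(t) − y(t)ψ₂(t) + 2t(ψ₀u(t)² + ψ₁(t)(1+y(t)²) + ψ₂(t)u(t)) is constant along every Pontryagin extremal. -/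
/-- For L = u², ẋ = 1 + y², ẏ = u: the quantity
(2t − 4x)ψ₁ − yψ₂ + 2t(ψ₀u² + ψ₁(1+y²) + ψ₂u) is constant. -/
theorem u_squared_conservation
    (a b : ℝ) (x y u ψ₁ ψ₂ : ℝ → ℝ) (ψ0 : ℝ)
    (hx : Differentiable ℝ x) (hy : Differentiable ℝ y) (hu : Differentiable ℝ u)
    (hψ₁ : Differentiable ℝ ψ₁) (hψ₂ : Differentiable ℝ ψ₂)
    (hsys₁ : ∀ t ∈ Set.Icc a b, deriv x t = 1 + (y t)^2)
    (hsys₂ : ∀ t ∈ Set.Icc a b, deriv y t = u t)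
    (hadj₁ : ∀ t ∈ Set.Icc a b, deriv ψ₁ t = 0)
    (hadj₂ : ∀ t ∈ Set.Icc a b, deriv ψ₂ t = -(2 * y t * ψ₁ t))
    (hstat : ∀ t ∈ Set.Icc a b, 2 * ψ0 * u t + ψ₂ t = 0) :
    ∀ t₁ ∈ Set.Icc a b, ∀ t₂ ∈ Set.Icc a b,
      (2 * t₁ - 4 * x t₁) * ψ₁ t₁ - y t₁ * ψ₂ t₁
        + 2 * t₁ * (ψ0 * (u t₁)^2 + ψ₁ t₁ * (1 + (y t₁)^2) + ψ₂ t₁ * u t₁)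
      = (2 * t₂ - 4 * x t₂) * ψ₁ t₂ - y t₂ * ψ₂ t₂
        + 2 * t₂ * (ψ0 * (u t₂)^2 + ψ₁ t₂ * (1 + (y t₂)^2) + ψ₂ t₂ * u t₂) := by
  intro t₁ ht₁ t₂ ht₂
  set F : ℝ → ℝ := fun t =>
    (2 * t - 4 * x t) * ψ₁ t - y t * ψ₂ t
      + 2 * t * (ψ0 * (u t)^2 + ψ₁ t * (1 + (y t)^2) + ψ₂ t * u t) with hFdef
  have key : ∀ t ∈ Set.Icc a b, HasDerivAt F 0 t := by
    intro t ht
    have Hx : HasDerivAt x (1 + (y t)^2) t := hsys₁ t ht ▸ (hx t).hasDerivAt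
    have Hy : HasDerivAt y (u t) t := hsys₂ t ht ▸ (hy t).hasDerivAt
    have Hu : HasDerivAt u (deriv u t) t := (hu t).hasDerivAt
    have Hp1 : HasDerivAt ψ₁ 0 t := hadj₁ t ht ▸ (hψ₁ t).hasDerivAt
    have Hp2 : HasDerivAt ψ₂ (-(2 * y t * ψ₁ t)) t := hadj₂ t ht ▸ (hψ₂ t).hasDerivAt
    have Hid : HasDerivAt (fun s : ℝ => s) 1 t := hasDerivAt_id t
    have H1 : HasDerivAt (fun s => (2 * s - 4 * x s) * ψ₁ s)
        ((2 * 1 - 4 * (1 + (y t)^2)) * ψ₁ t + (2 * t - 4 * x t) * 0) t :=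
      ((Hid.const_mul 2).sub (Hx.const_mul 4)).mul Hp1
    have H2 : HasDerivAt (fun s => y s * ψ₂ s)
        (u t * ψ₂ t + y t * -(2 * y t * ψ₁ t)) t := Hy.mul Hp2
    have Hu2 : HasDerivAt (fun s => ψ0 * (u s)^2)
        (ψ0 * (2 * u t ^ 1 * deriv u t)) t := (Hu.pow 2).const_mul ψ0
    have Hy2 : HasDerivAt (fun s => ψ₁ s * (1 + (y s)^2))
        (0 * (1 + (y t)^2) + ψ₁ t * (0 + 2 * y t ^ 1 * u t)) t :=
      Hp1.mul ((hasDerivAt_const t (1:ℝ)).add (Hy.pow 2))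
    have Hpu : HasDerivAt (fun s => ψ₂ s * u s)
        (-(2 * y t * ψ₁ t) * u t + ψ₂ t * deriv u t) t := Hp2.mul Hu
    have H3 : HasDerivAt (fun s => 2 * s *
        (ψ0 * (u s)^2 + ψ₁ s * (1 + (y s)^2) + ψ₂ s * u s))
        (2 * 1 * (ψ0 * (u t)^2 + ψ₁ t * (1 + (y t)^2) + ψ₂ t * u t)
          + 2 * t * ((ψ0 * (2 * u t ^ 1 * deriv u t)
            + (0 * (1 + (y t)^2) + ψ₁ t * (0 + 2 * y t ^ 1 * u t)))
            + (-(2 * y t * ψ₁ t) * u t + ψ₂ t * deriv u t))) t :=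
      (Hid.const_mul 2).mul ((Hu2.add Hy2).add Hpu)
    have HF := (H1.sub H2).add H3
    refine HF.congr_deriv (Eq.symm ?_)
    have hs := hstat t ht
    linear_combination (-(u t + 2 * t * deriv u t)) * hs
  have hcont : ContinuousOn F (Set.Icc a b) := by
    apply Continuous.continuousOn
    have := hx.continuous; have := hy.continuous; have := hu.continuous
    have := hψ₁.continuous; have := hψ₂.continuous
    fun_prop
  have hd : ∀ s ∈ Set.Ico a b, HasDerivWithinAt F 0 (Set.Ici s) s := fun s hs =>
    (key s (Set.Ico_subset_Icc_self hs)).hasDerivWithinAt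
  have h1 := constant_of_has_deriv_right_zero hcont hd t₁ ht₁
  have h2 := constant_of_has_deriv_right_zero hcont hd t₂ ht₂
  show F t₁ = F t₂
  rw [h1, h2]
end

section
/- For the minimum-time problem with dynamics ẋ₁ = 1 + x₂, ẋ₂ = x₃, ẋ₃ = u, ẋ₄ = x₃² − x₂², the quantity (x₁(t) − t)ψ₁(t) + x₂(t)ψ₂(t) + x₃(t)ψ₃(t) + 2x₄(t)ψ₄(t) is constant along every Pontryagin extremal. -/
/-- Minimum-time problem: (x₁ − t)ψ₁ + x₂ψ₂ + x₃ψ₃ + 2x₄ψ₄ is constant along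
every Pontryagin extremal. -/
theorem min_time_conservation_8
    (a b : ℝ) (x₁ x₂ x₃ x₄ u ψ₁ ψ₂ ψ₃ ψ₄ : ℝ → ℝ) (ψ0 : ℝ)
    (hx₁ : Differentiable ℝ x₁) (hx₂ : Differentiable ℝ x₂)
    (hx₃ : Differentiable ℝ x₃) (hx₄ : Differentiable ℝ x₄)
    (hu : Differentiable ℝ u)
    (hψ₁ : Differentiable ℝ ψ₁) (hψ₂ : Differentiable ℝ ψ₂)
    (hψ₃ : Differentiable ℝ ψ₃) (hψ₄ : Differentiable ℝ ψ₄)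
    (hsys₁ : ∀ t ∈ Set.Icc a b, deriv x₁ t = 1 + x₂ t)
    (hsys₂ : ∀ t ∈ Set.Icc a b, deriv x₂ t = x₃ t)
    (hsys₃ : ∀ t ∈ Set.Icc a b, deriv x₃ t = u t)
    (hsys₄ : ∀ t ∈ Set.Icc a b, deriv x₄ t = (x₃ t)^2 - (x₂ t)^2)
    (hadj₁ : ∀ t ∈ Set.Icc a b, deriv ψ₁ t = 0)
    (hadj₂ : ∀ t ∈ Set.Icc a b, deriv ψ₂ t = -(ψ₁ t) + 2 * x₂ t * ψ₄ t)
    (hadj₃ : ∀ t ∈ Set.Icc a b, deriv ψ₃ t = -(ψ₂ t) - 2 * x₃ t * ψ₄ t)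
    (hadj₄ : ∀ t ∈ Set.Icc a b, deriv ψ₄ t = 0)
    (hstat : ∀ t ∈ Set.Icc a b, ψ₃ t = 0) :
    ∀ t₁ ∈ Set.Icc a b, ∀ t₂ ∈ Set.Icc a b,
      (x₁ t₁ - t₁) * ψ₁ t₁ + x₂ t₁ * ψ₂ t₁ + x₃ t₁ * ψ₃ t₁ + 2 * x₄ t₁ * ψ₄ t₁
      = (x₁ t₂ - t₂) * ψ₁ t₂ + x₂ t₂ * ψ₂ t₂ + x₃ t₂ * ψ₃ t₂
        + 2 * x₄ t₂ * ψ₄ t₂ := by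
  set F : ℝ → ℝ := fun t =>
    (x₁ t - t) * ψ₁ t + x₂ t * ψ₂ t + x₃ t * ψ₃ t + 2 * x₄ t * ψ₄ t with hF
  have hFd : Differentiable ℝ F := by
    apply Differentiable.add
    apply Differentiable.add
    apply Differentiable.add
    · exact (hx₁.sub differentiable_id).mul hψ₁
    · exact hx₂.mul hψ₂
    · exact hx₃.mul hψ₃
    · exact ((differentiable_const 2).mul hx₄).mul hψ₄
  have key : ∀ t ∈ Set.Icc a b, HasDerivAt F 0 t := by
    intro t ht
    have h1 := (hx₁ t).hasDerivAt; rw [hsys₁ t ht] at h1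
    have h2 := (hx₂ t).hasDerivAt; rw [hsys₂ t ht] at h2
    have h3 := (hx₃ t).hasDerivAt; rw [hsys₃ t ht] at h3
    have h4 := (hx₄ t).hasDerivAt; rw [hsys₄ t ht] at h4
    have p1 := (hψ₁ t).hasDerivAt; rw [hadj₁ t ht] at p1
    have p2 := (hψ₂ t).hasDerivAt; rw [hadj₂ t ht] at p2
    have p3 := (hψ₃ t).hasDerivAt; rw [hadj₃ t ht] at p3
    have p4 := (hψ₄ t).hasDerivAt; rw [hadj₄ t ht] at p4
    have H := ((((h1.sub (hasDerivAt_id t)).mul p1).add (h2.mul p2)).add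
      (h3.mul p3)).add ((h4.const_mul 2).mul p4)
    refine H.congr_deriv ?_
    rw [hstat t ht]; ring
  have hconst : ∀ s ∈ Set.Icc a b, F s = F a :=
    constant_of_has_deriv_right_zero (hFd.continuous.continuousOn)
      (fun s hs => (key s (Set.mem_Icc_of_Ico hs)).hasDerivWithinAt)
  intro t₁ ht₁ t₂ ht₂
  have := (hconst t₁ ht₁).trans (hconst t₂ ht₂).symm
  simpa [hF] using this
end

section
/- For the minimum-time problem with dynamics ẋ = 1 + y² − z², ẏ = z, ż = u, the quantity (−2t + 2x(t))ψ₁(t) + y(t)ψ₂(t) + z(t)ψ₃(t) is constant along every Pontryagin extremal. -/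
/-- Minimum-time problem: (−2t + 2x)ψ₁ + yψ₂ + zψ₃ is constant along every
Pontryagin extremal. -/
theorem min_time_conservation_9
    (a b : ℝ) (x y z u ψ₁ ψ₂ ψ₃ : ℝ → ℝ) (ψ0 : ℝ)
    (hx : Differentiable ℝ x) (hy : Differentiable ℝ y) (hz : Differentiable ℝ z)
    (hu : Differentiable ℝ u)
    (hψ₁ : Differentiable ℝ ψ₁) (hψ₂ : Differentiable ℝ ψ₂)
    (hψ₃ : Differentiable ℝ ψ₃)
    (hsys₁ : ∀ t ∈ Set.Icc a b, deriv x t = 1 + (y t)^2 - (z t)^2)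
    (hsys₂ : ∀ t ∈ Set.Icc a b, deriv y t = z t)
    (hsys₃ : ∀ t ∈ Set.Icc a b, deriv z t = u t)
    (hadj₁ : ∀ t ∈ Set.Icc a b, deriv ψ₁ t = 0)
    (hadj₂ : ∀ t ∈ Set.Icc a b, deriv ψ₂ t = -(2 * y t * ψ₁ t))
    (hadj₃ : ∀ t ∈ Set.Icc a b, deriv ψ₃ t = 2 * z t * ψ₁ t - ψ₂ t)
    (hstat : ∀ t ∈ Set.Icc a b, ψ₃ t = 0) :
    ∀ t₁ ∈ Set.Icc a b, ∀ t₂ ∈ Set.Icc a b,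
      (-2 * t₁ + 2 * x t₁) * ψ₁ t₁ + y t₁ * ψ₂ t₁ + z t₁ * ψ₃ t₁
      = (-2 * t₂ + 2 * x t₂) * ψ₁ t₂ + y t₂ * ψ₂ t₂ + z t₂ * ψ₃ t₂ := by
  set F : ℝ → ℝ := fun t => (-2 * t + 2 * x t) * ψ₁ t + y t * ψ₂ t + z t * ψ₃ t with hF
  have key : ∀ t ∈ Set.Icc a b, HasDerivAt F 0 t := by
    intro t ht
    have h1 : HasDerivAt x (deriv x t) t := (hx t).hasDerivAt
    have h2 : HasDerivAt y (deriv y t) t := (hy t).hasDerivAt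
    have h3 : HasDerivAt z (deriv z t) t := (hz t).hasDerivAt
    have h4 : HasDerivAt ψ₁ (deriv ψ₁ t) t := (hψ₁ t).hasDerivAt
    have h5 : HasDerivAt ψ₂ (deriv ψ₂ t) t := (hψ₂ t).hasDerivAt
    have h6 : HasDerivAt ψ₃ (deriv ψ₃ t) t := (hψ₃ t).hasDerivAt
    have hid : HasDerivAt (fun s : ℝ => s) 1 t := hasDerivAt_id t
    have hD : HasDerivAt F
        ((-2 * 1 + 2 * deriv x t) * ψ₁ t + (-2 * t + 2 * x t) * deriv ψ₁ t
          + (deriv y t * ψ₂ t + y t * deriv ψ₂ t)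
          + (deriv z t * ψ₃ t + z t * deriv ψ₃ t)) t := by
      exact (((((hid.const_mul (-2 : ℝ)).add (h1.const_mul 2)).mul h4).add
        (h2.mul h5)).add (h3.mul h6))
    convert hD using 1
    rw [hsys₁ t ht, hsys₂ t ht, hsys₃ t ht, hadj₁ t ht, hadj₂ t ht, hadj₃ t ht,
      hstat t ht]
    ring
  have hconst : ∀ t ∈ Set.Icc a b, F t = F a :=
    constant_of_has_deriv_right_zero
      (fun t ht => (key t ht).continuousAt.continuousWithinAt)
      (fun t ht => ((key t (Set.mem_Icc_of_Ico ht)).hasDerivWithinAt))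
  intro t₁ ht₁ t₂ ht₂
  have := (hconst t₁ ht₁).trans (hconst t₂ ht₂).symm
  simpa [hF] using this
end

section
/- For the flat Martinet sub-Riemannian problem with Lagrangian u₁² + u₂² and dynamics ẋ₁ = u₁, ẋ₂ = u₂, ẋ₃ = x₂²u₁, the quantity x₁ψ₁ + x₂ψ₂ + 3x₃ψ₃ − 2t(ψ₀(u₁²+u₂²) + ψ₁u₁ + ψ₂u₂ + ψ₃x₂²u₁) is constant along every Pontryagin extremal. -/
/-- Flat Martinet problem: x₁ψ₁ + x₂ψ₂ + 3x₃ψ₃ − 2tH is constant along every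
Pontryagin extremal. -/
theorem martinet_flat_conservation
    (a b : ℝ) (x₁ x₂ x₃ u₁ u₂ ψ₁ ψ₂ ψ₃ : ℝ → ℝ) (ψ0 : ℝ)
    (hx₁ : Differentiable ℝ x₁) (hx₂ : Differentiable ℝ x₂) (hx₃ : Differentiable ℝ x₃)
    (hu₁ : Differentiable ℝ u₁) (hu₂ : Differentiable ℝ u₂)
    (hψ₁ : Differentiable ℝ ψ₁) (hψ₂ : Differentiable ℝ ψ₂) (hψ₃ : Differentiable ℝ ψ₃)
    (hsys₁ : ∀ t ∈ Set.Icc a b, deriv x₁ t = u₁ t)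
    (hsys₂ : ∀ t ∈ Set.Icc a b, deriv x₂ t = u₂ t)
    (hsys₃ : ∀ t ∈ Set.Icc a b, deriv x₃ t = (x₂ t)^2 * u₁ t)
    (hadj₁ : ∀ t ∈ Set.Icc a b, deriv ψ₁ t = 0)
    (hadj₂ : ∀ t ∈ Set.Icc a b, deriv ψ₂ t = -(2 * x₂ t * u₁ t * ψ₃ t))
    (hadj₃ : ∀ t ∈ Set.Icc a b, deriv ψ₃ t = 0)
    (hstat₁ : ∀ t ∈ Set.Icc a b,
      2 * ψ0 * u₁ t + ψ₁ t + ψ₃ t * (x₂ t)^2 = 0)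
    (hstat₂ : ∀ t ∈ Set.Icc a b, 2 * ψ0 * u₂ t + ψ₂ t = 0) :
    ∀ t₁ ∈ Set.Icc a b, ∀ t₂ ∈ Set.Icc a b,
      x₁ t₁ * ψ₁ t₁ + x₂ t₁ * ψ₂ t₁ + 3 * x₃ t₁ * ψ₃ t₁
        - 2 * t₁ * (ψ0 * ((u₁ t₁)^2 + (u₂ t₁)^2) + ψ₁ t₁ * u₁ t₁
          + ψ₂ t₁ * u₂ t₁ + ψ₃ t₁ * (x₂ t₁)^2 * u₁ t₁)
      = x₁ t₂ * ψ₁ t₂ + x₂ t₂ * ψ₂ t₂ + 3 * x₃ t₂ * ψ₃ t₂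
        - 2 * t₂ * (ψ0 * ((u₁ t₂)^2 + (u₂ t₂)^2) + ψ₁ t₂ * u₁ t₂
          + ψ₂ t₂ * u₂ t₂ + ψ₃ t₂ * (x₂ t₂)^2 * u₁ t₂) := by

  set F : ℝ → ℝ := fun s =>
      x₁ s * ψ₁ s + x₂ s * ψ₂ s + 3 * x₃ s * ψ₃ s
        - 2 * s * (ψ0 * ((u₁ s)^2 + (u₂ s)^2) + ψ₁ s * u₁ s
          + ψ₂ s * u₂ s + ψ₃ s * (x₂ s)^2 * u₁ s) with hF
  have key : ∀ t ∈ Set.Icc a b, HasDerivAt F 0 t := by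
    intro t ht
    have h :
        HasDerivAt F
          ((deriv x₁ t * ψ₁ t + x₁ t * deriv ψ₁ t)
            + (deriv x₂ t * ψ₂ t + x₂ t * deriv ψ₂ t)
            + ((3 * deriv x₃ t) * ψ₃ t + 3 * x₃ t * deriv ψ₃ t)
            - ((2 * 1) * (ψ0 * ((u₁ t)^2 + (u₂ t)^2) + ψ₁ t * u₁ t
                + ψ₂ t * u₂ t + ψ₃ t * (x₂ t)^2 * u₁ t)
              + 2 * t * (ψ0 * ((↑2 * u₁ t ^ 1 * deriv u₁ t) + (↑2 * u₂ t ^ 1 * deriv u₂ t))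
                + (deriv ψ₁ t * u₁ t + ψ₁ t * deriv u₁ t)
                + (deriv ψ₂ t * u₂ t + ψ₂ t * deriv u₂ t)
                + ((deriv ψ₃ t * (x₂ t)^2 + ψ₃ t * (↑2 * x₂ t ^ 1 * deriv x₂ t)) * u₁ t
                  + ψ₃ t * (x₂ t)^2 * deriv u₁ t)))) t := by
      exact ((((hx₁ t).hasDerivAt.mul (hψ₁ t).hasDerivAt).add
          ((hx₂ t).hasDerivAt.mul (hψ₂ t).hasDerivAt)).add
          ((((hx₃ t).hasDerivAt.const_mul 3).mul (hψ₃ t).hasDerivAt))).sub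
        (((hasDerivAt_id t).const_mul 2).mul
          (((((((hu₁ t).hasDerivAt.pow 2).add ((hu₂ t).hasDerivAt.pow 2)).const_mul ψ0).add
            ((hψ₁ t).hasDerivAt.mul (hu₁ t).hasDerivAt)).add
            ((hψ₂ t).hasDerivAt.mul (hu₂ t).hasDerivAt)).add
            ((((hψ₃ t).hasDerivAt.mul ((hx₂ t).hasDerivAt.pow 2)).mul
              (hu₁ t).hasDerivAt))))
    convert h using 1
    rw [hsys₁ t ht, hsys₂ t ht, hsys₃ t ht, hadj₁ t ht, hadj₂ t ht, hadj₃ t ht]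
    linear_combination (u₁ t + 2 * t * deriv u₁ t) * hstat₁ t ht
      + (u₂ t + 2 * t * deriv u₂ t) * hstat₂ t ht
  intro t₁ ht₁ t₂ ht₂
  have hdiff : Continuous F := by
    apply Continuous.sub
    · have := hx₁.continuous; have := hx₂.continuous; have := hx₃.continuous; have := hψ₁.continuous; have := hψ₂.continuous; have := hψ₃.continuous; fun_prop
    · have := hu₁.continuous; have := hu₂.continuous; have := hx₂.continuous; have := hψ₁.continuous; have := hψ₂.continuous; have := hψ₃.continuous; fun_prop
  have hc : ∀ t ∈ Set.Icc a b, F t = F a :=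
    constant_of_has_deriv_right_zero hdiff.continuousOn
      (fun x hx => (key x (Set.Ico_subset_Icc_self hx)).hasDerivWithinAt)
  have := (hc t₁ ht₁).trans (hc t₂ ht₂).symm
  simpa [hF] using this
end

section
/- For the Emden–Fowler variational problem with Lagrangian L = (t²/2)(ẋ² − x⁶/3), the quantity 3t²x(t)ẋ(t) + 3t³ẋ(t)² + t³x(t)⁶ is constant along every Euler–Lagrange extremal. -/
/-- Emden–Fowler problem: 3t²xẋ + 3t³ẋ² + t³x⁶ is constant along every
Euler–Lagrange extremal. -/
theorem emden_fowler_conservation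
    (a b : ℝ) (ha : 0 < a)
    (x : ℝ → ℝ) (hx : Differentiable ℝ x) (hx' : Differentiable ℝ (deriv x))
    (hEL : ∀ t ∈ Set.Icc a b,
      t^2 * deriv (deriv x) t + 2 * t * deriv x t + t^2 * (x t)^5 = 0) :
    ∀ t₁ ∈ Set.Icc a b, ∀ t₂ ∈ Set.Icc a b,
      3 * t₁^2 * x t₁ * deriv x t₁ + 3 * t₁^3 * (deriv x t₁)^2 + t₁^3 * (x t₁)^6
      = 3 * t₂^2 * x t₂ * deriv x t₂ + 3 * t₂^3 * (deriv x t₂)^2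
        + t₂^3 * (x t₂)^6 := by
  set F : ℝ → ℝ := fun t =>
    3 * t^2 * x t * deriv x t + 3 * t^3 * (deriv x t)^2 + t^3 * (x t)^6 with hF
  have key : ∀ t ∈ Set.Icc a b, HasDerivAt F 0 t := by
    intro t ht
    have h1 : HasDerivAt x (deriv x t) t := (hx t).hasDerivAt
    have h2 : HasDerivAt (deriv x) (deriv (deriv x) t) t := (hx' t).hasDerivAt
    have hid : HasDerivAt (fun s : ℝ => s) 1 t := hasDerivAt_id t
    have hD : HasDerivAt F
        (3 * (2 * t) * x t * deriv x t + 3 * t^2 * deriv x t * deriv x t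
          + 3 * t^2 * x t * deriv (deriv x) t
          + 3 * (3 * t^2) * (deriv x t)^2
          + 3 * t^3 * (2 * deriv x t * deriv (deriv x) t)
          + 3 * t^2 * (x t)^6 + t^3 * (6 * (x t)^5 * deriv x t)) t := by
      have hA : HasDerivAt (fun s => 3 * s^2 * x s * deriv x s)
          (3 * (2 * t) * x t * deriv x t + 3 * t^2 * deriv x t * deriv x t
            + 3 * t^2 * x t * deriv (deriv x) t) t := by
        have := (((hasDerivAt_pow 2 t).const_mul 3).mul h1).mul h2
        refine this.congr_deriv ?_
        simp [pow_one]
        ring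
      have hB : HasDerivAt (fun s => 3 * s^3 * (deriv x s)^2)
          (3 * (3 * t^2) * (deriv x t)^2
            + 3 * t^3 * (2 * deriv x t * deriv (deriv x) t)) t := by
        have := ((hasDerivAt_pow 3 t).const_mul 3).mul
          ((h2.pow 2))
        refine this.congr_deriv ?_
        simp [pow_one]
      have hC : HasDerivAt (fun s => s^3 * (x s)^6)
          (3 * t^2 * (x t)^6 + t^3 * (6 * (x t)^5 * deriv x t)) t := by
        have := (hasDerivAt_pow 3 t).mul (h1.pow 6)
        refine this.congr_deriv ?_
        simp
      have hsum := (hA.add hB).add hC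
      rw [hF]
      refine hsum.congr_deriv ?_
      ring
    have hel := hEL t ht
    convert hD using 1
    linear_combination (-(3 * x t) - 6 * t * deriv x t) * hel
  intro t₁ ht₁ t₂ ht₂
  have hconst : ∀ s ∈ Set.Icc a b, F s = F a := by
    rcases le_or_gt a b with hab | hab
    · intro s hs
      have := constant_of_has_deriv_right_zero
        (f := F) (a := a) (b := b)
        (fun u hu => ((key u hu).continuousAt.continuousWithinAt))
        (fun u hu => (key u (Set.mem_Icc.mpr ⟨hu.1, hu.2.le⟩)).hasDerivWithinAt)
      exact this s hs
    · intro s hs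
      exact absurd (hs.1.trans hs.2) (not_le.mpr hab)
  have := (hconst t₁ ht₁).trans (hconst t₂ ht₂).symm
  simpa [hF] using this
end

section
/- For the damped harmonic oscillator with Lagrangian L = ½(mẋ² − kx²)e^{at/m}, the quantity (1/2)e^{at/m}(a x(t)ẋ(t) + m ẋ(t)² + k x(t)²) is constant along every Euler–Lagrange extremal. -/
/-- Damped harmonic oscillator: (1/2)e^{at/m}(a x ẋ + m ẋ² + k x²) is constant
along every Euler–Lagrange extremal. -/
theorem damped_oscillator_conservation
    (a' b' m k a : ℝ) (hm : m ≠ 0)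
    (x : ℝ → ℝ) (hx : Differentiable ℝ x) (hx' : Differentiable ℝ (deriv x))
    (hEL : ∀ t ∈ Set.Icc a' b',
      m * deriv (deriv x) t + a * deriv x t + k * x t = 0) :
    ∀ t₁ ∈ Set.Icc a' b', ∀ t₂ ∈ Set.Icc a' b',
      (1/2) * Real.exp (a * t₁ / m)
        * (a * x t₁ * deriv x t₁ + m * (deriv x t₁)^2 + k * (x t₁)^2)
      = (1/2) * Real.exp (a * t₂ / m)
        * (a * x t₂ * deriv x t₂ + m * (deriv x t₂)^2 + k * (x t₂)^2) := by
  set E : ℝ → ℝ := fun t => (1/2) * Real.exp (a * t / m)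
        * (a * x t * deriv x t + m * (deriv x t)^2 + k * (x t)^2) with hE
  have key : ∀ t ∈ Set.Icc a' b', HasDerivAt E 0 t := by
    intro t ht
    set u := x t
    set v := deriv x t
    set w := deriv (deriv x) t
    have hxt : HasDerivAt x v t := (hx t).hasDerivAt
    have hvt : HasDerivAt (deriv x) w t := (hx' t).hasDerivAt
    have hexp : HasDerivAt (fun t => (1/2) * Real.exp (a * t / m))
        ((1/2) * (Real.exp (a * t / m) * (a / m))) t := by
      have h0 : HasDerivAt (fun t : ℝ => a * t / m) (a / m) t := by
        simpa using ((hasDerivAt_id t).const_mul a).div_const m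
      exact ((Real.hasDerivAt_exp (a * t / m)).comp t h0).const_mul _
    have h1 : HasDerivAt (fun t => a * x t * deriv x t)
        (a * u * w + a * v * v) t := by
      have := (hxt.const_mul a).mul hvt
      exact this.congr_deriv (by ring)
    have h2 : HasDerivAt (fun t => m * (deriv x t)^2) (m * (2 * v * w)) t := by
      have := (hvt.pow 2).const_mul m
      exact this.congr_deriv (by ring)
    have h3 : HasDerivAt (fun t => k * (x t)^2) (k * (2 * u * v)) t := by
      have := (hxt.pow 2).const_mul k
      exact this.congr_deriv (by ring)
    have hin := (h1.add h2).add h3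
    have hmul := hexp.mul hin
    have hel := hEL t ht
    refine hmul.congr_deriv (Eq.symm ?_)
    have : m * w + a * v + k * u = 0 := hel
    simp only [Pi.add_apply]
    field_simp
    linear_combination (-(Real.exp (a * t / m) * (a * u + 2 * m * v))) * this
  intro t₁ ht₁ t₂ ht₂
  have hc : ContinuousOn E (Set.Icc a' b') :=
    fun t ht => ((key t ht).continuousAt).continuousWithinAt
  have h := constant_of_has_deriv_right_zero hc
    (fun t ht => ((key t (Set.mem_Icc_of_Ico ht)).hasDerivWithinAt))
  exact (h t₁ ht₁).trans (h t₂ ht₂).symm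
end
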